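/- Let L be a unimodular probability measure on rooted graphs and B a Borel set of rooted graphs with L(B) = 1. Then L-almost surely, (G,x) ∈ B for every vertex x of G ("everything shows at the root"). -/

import Mathlib

open scoped ENNReal
open MeasureTheory

/-- Rooted countable graphs are modeled as adjacency functions on `ℕ`, the root being `0`. -/
abbrev Env : Type := ℕ → ℕ → Bool

/-- Relabeling the vertices of a graph by a permutation of `ℕ`. -/
def relabel (φ : ℕ ≃ ℕ) (A : Env) : Env := fun u v => A (φ.symm u) (φ.symm v)

/-! Send unit mass from the root `o` to every vertex `x` such that `(G, x) ∉ B`. The mass that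
arrives at the root is `∞ · 1_{(G,o) ∉ B}`, whose expectation vanishes because `L(B) = 1`; by the
Mass Transport Principle so does the expected mass sent out, and that mass counts the vertices
at which `G` leaves `B`. -/

/-- The Mass Transport Principle, for diagonally invariant transports `f G x y` from `x` to `y`. -/
def IsUnimodular (L : Measure Env) : Prop :=
  ∀ f : Env → ℕ → ℕ → ℝ≥0∞,
    (∀ (φ : ℕ ≃ ℕ) (A : Env) (x y : ℕ), f (relabel φ A) (φ x) (φ y) = f A x y) →
    Measurable (fun p : Env × ℕ × ℕ => f p.1 p.2.1 p.2.2) →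
    ∫⁻ A, ∑' x, f A 0 x ∂L = ∫⁻ A, ∑' x, f A x 0 ∂L

/-- `B` is a property of rooted isomorphism classes. -/
def IsRootInvariant (B : Set Env) : Prop :=
  ∀ φ : ℕ ≃ ℕ, φ 0 = 0 → ∀ A : Env, relabel φ A ∈ B ↔ A ∈ B

lemma relabel_relabel (ψ φ : ℕ ≃ ℕ) (A : Env) :
    relabel ψ (relabel φ A) = relabel (φ.trans ψ) A := rfl

@[simp]
lemma relabel_refl (A : Env) : relabel (Equiv.refl ℕ) A = A := rfl

lemma measurable_relabel (φ : ℕ ≃ ℕ) : Measurable (relabel φ) :=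
  measurable_pi_lambda _ fun u => measurable_pi_lambda _ fun v =>
    (measurable_pi_apply (φ.symm v)).comp (measurable_pi_apply (φ.symm u))

/-- Rerooting at `y` commutes with relabeling, up to a root-fixing relabeling. -/
lemma IsRootInvariant.reroot_relabel_mem_iff {B : Set Env} (hB : IsRootInvariant B)
    (φ : ℕ ≃ ℕ) (A : Env) (y : ℕ) :
    relabel (Equiv.swap 0 (φ y)) (relabel φ A) ∈ B ↔ relabel (Equiv.swap 0 y) A ∈ B := by
  set θ : ℕ ≃ ℕ := (Equiv.swap 0 y).trans (φ.trans (Equiv.swap 0 (φ y)))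
  have hθ : φ.trans (Equiv.swap 0 (φ y)) = (Equiv.swap 0 y).trans θ := by
    ext n; simp [θ]
  have hθ0 : θ 0 = 0 := by simp [θ]
  rw [relabel_relabel, hθ, ← relabel_relabel, hB θ hθ0]

theorem IsUnimodular.ae_forall_reroot_mem {L : Measure Env} (hL : IsUnimodular L)
    {B : Set Env} (hBmeas : MeasurableSet B) (hBinv : IsRootInvariant B)
    (hB : ∀ᵐ A ∂L, A ∈ B) :
    ∀ᵐ A ∂L, ∀ x : ℕ, relabel (Equiv.swap 0 x) A ∈ B := by
  classical
  set f : Env → ℕ → ℕ → ℝ≥0∞ := fun A _ y => Bᶜ.indicator 1 (relabel (Equiv.swap 0 y) A)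
  have hf_meas (y : ℕ) : Measurable fun A => f A 0 y :=
    (measurable_one.indicator hBmeas.compl).comp (measurable_relabel _)
  have hf_inv (φ : ℕ ≃ ℕ) (A : Env) (x y : ℕ) : f (relabel φ A) (φ x) (φ y) = f A x y := by
    simp only [f, Set.indicator_apply, Set.mem_compl_iff, Pi.one_apply,
      hBinv.reroot_relabel_mem_iff]
  have hf_in : ∀ᵐ A ∂L, ∑' x, f A x 0 = 0 := by
    filter_upwards [hB] with A hA
    simp [f, hA]
  have hf_out : ∫⁻ A, ∑' x, f A 0 x ∂L = 0 := by
    rw [hL f hf_inv (measurable_from_prod_countable_left fun p => hf_meas p.2),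
      lintegral_congr_ae hf_in, lintegral_zero]
  filter_upwards [(lintegral_eq_zero_iff (.tsum hf_meas)).1 hf_out] with A hA x
  by_contra hx
  simpa [f, hx] using ENNReal.tsum_eq_zero.1 hA x

/-- **Everything shows at the root.** Let `L` be a unimodular probability measure on rooted
graphs (i.e. satisfying the Mass Transport Principle) and `B` a Borel, isomorphism-invariant
set of rooted graphs with `L(B) = 1`.  Then `L`-almost surely, `(G,x) ∈ B` for every vertex
`x` of `G` (rerooting at `x` is realized by relabeling with the transposition `(0 x)`). -/
theorem everything_shows_at_the_root (L : Measure Env) [IsProbabilityMeasure L]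
    (hMTP : ∀ f : Env → ℕ → ℕ → ℝ≥0∞,
      (∀ (φ : ℕ ≃ ℕ) (A : Env) (x y : ℕ), f (relabel φ A) (φ x) (φ y) = f A x y) →
      Measurable (fun p : Env × ℕ × ℕ => f p.1 p.2.1 p.2.2) →
      ∫⁻ A, ∑' x, f A 0 x ∂L = ∫⁻ A, ∑' x, f A x 0 ∂L)
    (B : Set Env) (hBmeas : MeasurableSet B)
    (hBinv : ∀ (φ : ℕ ≃ ℕ), φ 0 = 0 → ∀ A : Env, relabel φ A ∈ B ↔ A ∈ B)
    (hB : L B = 1) :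
    L {A : Env | ∀ x : ℕ, relabel (Equiv.swap 0 x) A ∈ B} = 1 := by
  have hB_ae : ∀ᵐ A ∂L, A ∈ B := by
    rwa [ae_mem_iff_measure_eq hBmeas.nullMeasurableSet, measure_univ]
  have h := IsUnimodular.ae_forall_reroot_mem hMTP hBmeas hBinv hB_ae
  exact (measure_congr (ae_eq_univ.2 (ae_iff.1 h))).trans measure_univ
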